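/- The functions f(t) = (1 + 5t)^{3/5}, h(t) = (1 + 5t)^{−1/5}, k(t) = (1 + 5t)^{−2/5}, defined on the interval (−1/5, ∞), satisfy f(0) = h(0) = k(0) = 1 and, for all t ∈ (−1/5, ∞), the system of ordinary differential equations f′ = 2k + h / (k f), h′ = −h² / (k f²), k′ = −2 k² / f. -/

import Mathlib

open Set

/-- `f(t) = (1 + 5t)^{3/5}`. -/
noncomputable def fG2 (t : ℝ) : ℝ := (1 + 5 * t) ^ ((3 : ℝ)/5)

/-- `h(t) = (1 + 5t)^{-1/5}`. -/
noncomputable def hG2 (t : ℝ) : ℝ := (1 + 5 * t) ^ (-((1 : ℝ)/5))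

/-- `k(t) = (1 + 5t)^{-2/5}`. -/
noncomputable def kG2 (t : ℝ) : ℝ := (1 + 5 * t) ^ (-((2 : ℝ)/5))

/-! With `r = (1 + 5t)^{1/5}` the functions `f, h, k` are the monomials `r³, r⁻¹, r⁻²`, and
`d/dt r^n = n r^{n-5}`; the system then reduces to identities between Laurent monomials in `r`. -/

theorem Real.rpow_intCast_div_eq_zpow {x : ℝ} (hx : 0 ≤ x) (n : ℤ) (m : ℝ) :
    x ^ ((n : ℝ) / m) = (x ^ m⁻¹) ^ n := by
  rw [div_eq_mul_inv, mul_comm, Real.rpow_mul_intCast hx]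

theorem hasDerivAt_affine_rpow_intCast_div {a t : ℝ} {m : ℕ} (hm : m ≠ 0)
    (ht : 0 < a + m * t) (n : ℤ) :
    HasDerivAt (fun x => (a + m * x) ^ ((n : ℝ) / m))
      (n * ((a + m * t) ^ (m : ℝ)⁻¹) ^ (n - m)) t := by
  have hlin : HasDerivAt (fun x => a + m * x) m t := by
    simpa using ((hasDerivAt_id t).const_mul (m : ℝ)).const_add a
  convert hlin.rpow_const (p := n / m) (Or.inl ht.ne') using 1
  have hm' : (m : ℝ) ≠ 0 := Nat.cast_ne_zero.mpr hm
  rw [← Real.rpow_intCast_div_eq_zpow ht.le, Int.cast_sub, Int.cast_natCast, sub_div,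
    div_self hm', mul_div_cancel₀ _ hm']

theorem hasDerivAt_one_add_five_mul_rpow_intCast_div {t : ℝ} (ht : -(1 / 5) < t) (n : ℤ) :
    HasDerivAt (fun x => (1 + 5 * x) ^ ((n : ℝ) / 5))
      (n * ((1 + 5 * t) ^ (5⁻¹ : ℝ)) ^ (n - 5)) t := by
  exact_mod_cast hasDerivAt_affine_rpow_intCast_div (a := 1) (m := 5) (by norm_num)
    (by push_cast; linarith) n

theorem explicit_solution_hitchin_system_nilpotent :
    fG2 0 = 1 ∧ hG2 0 = 1 ∧ kG2 0 = 1 ∧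
    ∀ t ∈ Ioi (-(1/5) : ℝ),
      HasDerivAt fG2 (2 * kG2 t + hG2 t / (kG2 t * fG2 t)) t ∧
      HasDerivAt hG2 (-(hG2 t ^ 2) / (kG2 t * fG2 t ^ 2)) t ∧
      HasDerivAt kG2 (-(2 * kG2 t ^ 2) / fG2 t) t := by
  refine ⟨by simp [fG2], by simp [hG2], by simp [kG2], fun t ht => ?_⟩
  have hu : 0 < 1 + 5 * t := by linarith [mem_Ioi.mp ht]
  have hr : 0 < (1 + 5 * t) ^ (5⁻¹ : ℝ) := by positivity
  have monomial (F : ℝ → ℝ) (n : ℤ) (hF : F = fun x => (1 + 5 * x) ^ ((n : ℝ) / 5)) :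
      F t = ((1 + 5 * t) ^ (5⁻¹ : ℝ)) ^ n ∧
        HasDerivAt F (n * ((1 + 5 * t) ^ (5⁻¹ : ℝ)) ^ (n - 5)) t :=
    hF ▸ ⟨Real.rpow_intCast_div_eq_zpow hu.le n 5,
      hasDerivAt_one_add_five_mul_rpow_intCast_div ht n⟩
  generalize (1 + 5 * t) ^ (5⁻¹ : ℝ) = r at monomial hr
  obtain ⟨hf, df⟩ := monomial fG2 3 (by ext; norm_num [fG2])
  obtain ⟨hh, dh⟩ := monomial hG2 (-1) (by ext; norm_num [hG2, neg_div])
  obtain ⟨hk, dk⟩ := monomial kG2 (-2) (by ext; norm_num [kG2, neg_div])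
  rw [hf, hh, hk]
  refine ⟨df.congr_deriv ?_, dh.congr_deriv ?_, dk.congr_deriv ?_⟩ <;> norm_num [zpow_neg] <;>
    field_simp
  ring
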